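/- Let C be a topos and consider a commutative cube in C whose top face and bottom face consist entirely of monomorphisms. Suppose the top face is a pullback square and the two front faces of the cube are pushout squares. Then the bottom face is a pullback square if and only if the two back faces are pushout squares. -/

import Mathlib

open CategoryTheory CategoryTheory.Limits

universe v u

/-- A category (with a terminal object) has a subobject classifier if there is a morphism
`truth : ⊤_ C ⟶ Ω` such that every monomorphism is a pullback of `truth` along a unique
characteristic morphism. -/
class HasSubobjectClassifier (C : Type u) [Category.{v} C] [HasTerminal C] : Prop where
  exists_classifier : ∃ (Ω : C) (truth : ⊤_ C ⟶ Ω), ∀ {U X : C} (m : U ⟶ X), Mono m →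
    ∃! χ : X ⟶ Ω, IsPullback m (terminal.from U) χ truth

/-- A topos is a category with finite limits that is cartesian closed and has a
subobject classifier. -/
class IsTopos (C : Type u) [Category.{v} C] extends HasFiniteLimits C : Prop where
  cartesianClosed : ∀ X : C, (prod.functor.obj X).IsLeftAdjoint
  hasSubobjectClassifier : _root_.HasSubobjectClassifier C

/-!
Two features of a topos carry the proof. Subobjects are determined by their characteristic
maps, so two subobjects of a pushout coincide as soon as their pullbacks along both injections
do. And a partial map `A ⇀ V` defined on a subobject `U ↪ A` is the pullback of the singleton
map `V ⟶ Ω^V` along the name `A ⟶ Ω^V` of its graph, so partial maps can be glued along a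
pushout; in particular a pushout along a mono is a pullback, and the front faces are pullbacks.

If the bottom face is a pullback, pasting makes the back faces pullbacks, and the first feature
shows that `x` and `fst` are jointly extremally epimorphic. A cocone `(a, b)` on the back span
gives partial maps `(f', a)` on `Z'` and `(snd, b)` on `Y`, which glue over the pushout `Z`;
restricted along `f` this is a partial map on `X` defined on a subobject through which `x` and
`fst` factor, hence a total map `X ⟶ T`.

Conversely, a back face that is a pushout along the mono `fst'` is a pullback, and then
`f ≫ χ g = χ fst` can be checked after precomposing with `x` and with `fst`.
-/

section Pullbacks

variable {𝒞 : Type u} [Category.{v} 𝒞]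

lemma CategoryTheory.IsPullback.of_fac_of_mono {N M E W Z : 𝒞} {j : N ⟶ M} {n : N ⟶ W}
    {m' : M ⟶ Z} {k : W ⟶ Z} (h : IsPullback j n m' k) {m : E ⟶ M} [Mono m] {u : N ⟶ E}
    (hu : u ≫ m = j) : IsPullback u n (m ≫ m') k := by
  simpa using (IsPullback.of_vert_isIso_mono ⟨by simp [hu]⟩ : IsPullback u (𝟙 N) m j).paste_vert h

lemma CategoryTheory.IsPullback.prod_lift [HasBinaryProducts 𝒞] {U A U' A' V : 𝒞} {i : U ⟶ A}
    {i' : U' ⟶ A'} {k : A' ⟶ A} {j : U' ⟶ U} [Mono i'] (hpb : IsPullback j i' i k) (h : U ⟶ V) :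
    IsPullback j (prod.lift (j ≫ h) i') (prod.lift h i) (prod.map (𝟙 V) k) := by
  refine IsPullback.mk' (by ext <;> simp [hpb.w]) (fun _ _ _ _ h₂ => ?_) (fun _ a b hab => ?_)
  · exact (cancel_mono i').1 (by simpa [prod.lift_snd] using h₂ =≫ prod.snd)
  · have hfst : a ≫ h = b ≫ prod.fst := by simpa [prod.lift_fst] using hab =≫ prod.fst
    have hsnd : a ≫ i = (b ≫ prod.snd) ≫ k := by simpa [prod.lift_snd] using hab =≫ prod.snd
    refine ⟨hpb.lift a (b ≫ prod.snd) hsnd, hpb.lift_fst _ _ _, ?_⟩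
    ext <;> simp [prod.lift_fst, prod.lift_snd, reassoc_of% hpb.lift_fst, hfst]

end Pullbacks

noncomputable def HasSubobjectClassifier.classifier (C : Type u) [Category.{v} C] [HasTerminal C]
    [_root_.HasSubobjectClassifier C] : Subobject.Classifier C :=
  let h := _root_.HasSubobjectClassifier.exists_classifier (C := C)
  Subobject.Classifier.mkOfTerminalΩ₀ (⊤_ C) terminalIsTerminal h.choose h.choose_spec.choose
    (fun m _ => (h.choose_spec.choose_spec m inferInstance).choose)
    (fun m _ => (h.choose_spec.choose_spec m inferInstance).choose_spec.1)
    (fun m _ => (h.choose_spec.choose_spec m inferInstance).choose_spec.2)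

namespace CategoryTheory.Subobject.Classifier

variable {𝒞 : Type u} [Category.{v} 𝒞] (c : Classifier 𝒞)

lemma comp_χ_of_isPullback {M N W Z : 𝒞} {m : M ⟶ Z} {n : N ⟶ W} {k : W ⟶ Z} {j : N ⟶ M}
    [Mono m] [Mono n] (h : IsPullback j n m k) : k ≫ c.χ m = c.χ n :=
  c.uniq n (h.flip.paste_vert (c.isPullback m))

lemma isPullback_of_comp_χ_eq {M N W Z : 𝒞} {m : M ⟶ Z} {n : N ⟶ W} {k : W ⟶ Z} {j : N ⟶ M}
    [Mono m] [Mono n] (w : j ≫ m = n ≫ k) (h : k ≫ c.χ m = c.χ n) : IsPullback j n m k := by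
  have hn := c.isPullback n
  rw [← h, Subsingleton.elim (c.χ₀ N) (j ≫ c.χ₀ M)] at hn
  exact (hn.of_bot w.symm (c.isPullback m)).flip

lemma isIso_of_χ_comp_eq {E X Z : 𝒞} {m : E ⟶ X} {f : X ⟶ Z} [Mono m] [Mono f]
    (h : c.χ (m ≫ f) = c.χ f) : IsIso m := by
  obtain ⟨s, hs, -⟩ :=
    (c.isPullback (m ≫ f)).exists_lift f (c.χ₀ X) (by rw [h, (c.isPullback f).w])
  have : IsSplitEpi m := ⟨⟨s, (cancel_mono f).1 (by simpa using hs)⟩⟩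
  exact isIso_of_mono_of_isSplitEpi m

section PowerObject

variable [HasBinaryProducts 𝒞] (V : 𝒞) [(prod.functor.obj V).IsLeftAdjoint]

noncomputable def powerObj : 𝒞 := (prod.functor.obj V).rightAdjoint.obj c.Ω

variable {V}

noncomputable def name {R A : 𝒞} (r : R ⟶ V ⨯ A) [Mono r] : A ⟶ c.powerObj V :=
  (Adjunction.ofIsLeftAdjoint (prod.functor.obj V)).homEquiv A c.Ω (c.χ r : V ⨯ A ⟶ c.Ω)

lemma comp_name {R A T : 𝒞} (r : R ⟶ V ⨯ A) [Mono r] (k : T ⟶ A) :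
    k ≫ c.name r = (Adjunction.ofIsLeftAdjoint (prod.functor.obj V)).homEquiv T c.Ω
      (prod.map (𝟙 V) k ≫ c.χ r : V ⨯ T ⟶ c.Ω) :=
  ((Adjunction.ofIsLeftAdjoint (prod.functor.obj V)).homEquiv_naturality_left k
    (c.χ r : V ⨯ A ⟶ c.Ω)).symm

lemma prod_lift_comp_χ_eq_of_comp_name_eq {R R' A B T : 𝒞} {r : R ⟶ V ⨯ A}
    {r' : R' ⟶ V ⨯ B} [Mono r] [Mono r'] {k : T ⟶ A} {l : T ⟶ B}
    (h : k ≫ c.name r = l ≫ c.name r') (e : T ⟶ V) :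
    prod.lift e k ≫ c.χ r = prod.lift e l ≫ c.χ r' := by
  rw [comp_name, comp_name] at h
  simpa [prod.lift_map_assoc] using prod.lift e (𝟙 T) ≫= (Equiv.injective _ h)

lemma comp_name_of_isPullback {R R' A A' : 𝒞} {r : R ⟶ V ⨯ A} {r' : R' ⟶ V ⨯ A'} [Mono r]
    [Mono r'] {k : A' ⟶ A} {j : R' ⟶ R} (h : IsPullback j r' r (prod.map (𝟙 V) k)) :
    k ≫ c.name r = c.name r' := by
  rw [comp_name, name, ← c.comp_χ_of_isPullback h]

noncomputable def partialMapName {U A : 𝒞} (i : U ⟶ A) [Mono i] (h : U ⟶ V) :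
    A ⟶ c.powerObj V :=
  c.name (prod.lift h i)

variable (V) in
noncomputable def singleton : V ⟶ c.powerObj V := c.partialMapName (𝟙 V) (𝟙 V)

lemma comp_partialMapName_of_isPullback {U A U' A' : 𝒞} {i : U ⟶ A} {i' : U' ⟶ A'} [Mono i]
    [Mono i'] {k : A' ⟶ A} {j : U' ⟶ U} (hpb : IsPullback j i' i k) (h : U ⟶ V) :
    k ≫ c.partialMapName i h = c.partialMapName i' (j ≫ h) :=
  c.comp_name_of_isPullback (hpb.prod_lift h)

lemma isPullback_partialMapName {U A : 𝒞} (i : U ⟶ A) [Mono i] (h : U ⟶ V) :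
    IsPullback i h (c.partialMapName i h) (c.singleton V) := by
  have w : i ≫ c.partialMapName i h = h ≫ c.singleton V := by
    rw [c.comp_partialMapName_of_isPullback ((mono_iff_isPullback i).1 inferInstance),
      singleton, c.comp_partialMapName_of_isPullback (IsPullback.of_id_snd (f := h))]
    simp
  refine IsPullback.mk' w (fun _ _ _ h₁ _ => (cancel_mono i).1 h₁) (fun T a b hab => ?_)
  have hgraph : prod.lift b a ≫ c.χ (prod.lift h i) = c.χ₀ T ≫ c.truth := by
    rw [c.prod_lift_comp_χ_eq_of_comp_name_eq hab b, ← Category.comp_id b,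
      ← prod.comp_lift, Category.assoc, (c.isPullback _).w, ← Category.assoc,
      Subsingleton.elim (b ≫ c.χ₀ V) (c.χ₀ T)]
  obtain ⟨l, hl, -⟩ := (c.isPullback (prod.lift h i)).exists_lift _ _ hgraph
  exact ⟨l, by simpa [prod.lift_snd] using hl =≫ prod.snd,
    by simpa [prod.lift_fst] using hl =≫ prod.fst⟩

instance mono_singleton : Mono (c.singleton V) :=
  (mono_iff_isPullback _).2 (c.isPullback_partialMapName (𝟙 V) (𝟙 V))

end PowerObject

end CategoryTheory.Subobject.Classifier

namespace IsTopos

variable {𝒞 : Type u} [Category.{v} 𝒞] [IsTopos 𝒞]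

variable (𝒞) in
noncomputable def classifier : Subobject.Classifier 𝒞 :=
  have := IsTopos.hasSubobjectClassifier (C := 𝒞)
  HasSubobjectClassifier.classifier 𝒞

instance isLeftAdjoint_prodFunctor (V : 𝒞) : (prod.functor.obj V).IsLeftAdjoint :=
  IsTopos.cartesianClosed V

lemma isPullback_of_isPushout_of_mono_left {W A B D : 𝒞} {f : W ⟶ A} {g : W ⟶ B}
    {inl : A ⟶ D} {inr : B ⟶ D} (H : IsPushout f g inl inr) [Mono f] :
    IsPullback f g inl inr := by
  let c := classifier 𝒞
  have hf := c.isPullback_partialMapName f g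
  obtain ⟨φ, hinl, hinr⟩ := H.exists_desc _ _ hf.w
  rw [← hinl, ← hinr] at hf
  refine IsPullback.mk' H.w (fun _ _ _ h₁ _ => (cancel_mono f).1 h₁)
    (fun _ s t hst => hf.exists_lift s t ?_)
  simp only [reassoc_of% hst]

end IsTopos

section Cube

variable {𝒞 : Type u} [Category.{v} 𝒞] {P' X' Y' Z' P X Y Z : 𝒞}
  {fst' : P' ⟶ X'} {snd' : P' ⟶ Y'} {f' : X' ⟶ Z'} {g' : Y' ⟶ Z'}
  {fst : P ⟶ X} {snd : P ⟶ Y} {f : X ⟶ Z} {g : Y ⟶ Z}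
  {p : P' ⟶ P} {x : X' ⟶ X} {y : Y' ⟶ Y} {z : Z' ⟶ Z}

lemma isPullback_back_of_isPullback_bottom (htop : IsPullback fst' snd' f' g')
    (hfront₁ : f' ≫ z = x ≫ f) (hfront₂ : IsPullback g' y z g) (hback₁ : fst' ≫ x = p ≫ fst)
    (hback₂ : snd' ≫ y = p ≫ snd) (hbot : IsPullback fst snd f g) :
    IsPullback fst' p x fst := by
  have h := htop.paste_vert hfront₂
  rw [hback₂, hfront₁] at h
  exact h.of_bot hback₁ hbot

variable [IsTopos 𝒞]

lemma isIso_of_fac_of_isPushout [Mono f] (hbot : IsPullback fst snd f g)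
    (hfront₁ : IsPullback f' x z f) (hfront₂ : IsPushout g' y z g) {E : 𝒞} (m : E ⟶ X) [Mono m]
    {u : X' ⟶ E} {v : P ⟶ E} (hu : u ≫ m = x) (hv : v ≫ m = fst) : IsIso m := by
  let c := IsTopos.classifier 𝒞
  have : Mono f' := hfront₁.mono_fst_of_mono
  have : Mono snd := hbot.mono_snd_of_mono
  refine c.isIso_of_χ_comp_eq (m := m) (f := f) (hfront₂.hom_ext ?_ ?_)
  · rw [c.comp_χ_of_isPullback (hfront₁.flip.of_fac_of_mono hu),
      c.comp_χ_of_isPullback hfront₁.flip]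
  · rw [c.comp_χ_of_isPullback (hbot.of_fac_of_mono hv), c.comp_χ_of_isPullback hbot]

lemma exists_desc_of_isPushout [Mono f] (htop : IsPullback fst' snd' f' g')
    (hbot : IsPullback fst snd f g) (hfront₁ : IsPullback f' x z f)
    (hfront₂ : IsPushout g' y z g) (hback₂ : IsPullback snd' p y snd) {T : 𝒞} (a : X' ⟶ T)
    (b : P ⟶ T) (hab : fst' ≫ a = p ≫ b) : ∃ d : X ⟶ T, x ≫ d = a ∧ fst ≫ d = b := by
  let c := IsTopos.classifier 𝒞
  have : Mono f' := hfront₁.mono_fst_of_mono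
  have : Mono snd := hbot.mono_snd_of_mono
  have : Mono snd' := htop.mono_snd_of_mono
  have compat : g' ≫ c.partialMapName f' a = y ≫ c.partialMapName snd b := by
    rw [c.comp_partialMapName_of_isPullback htop, hab,
      c.comp_partialMapName_of_isPullback hback₂.flip]
  let φ := hfront₂.desc _ _ compat
  have hx : x ≫ f ≫ φ = a ≫ c.singleton T := by
    rw [← reassoc_of% hfront₁.w, hfront₂.inl_desc]
    exact (c.isPullback_partialMapName f' a).w
  have hfst : fst ≫ f ≫ φ = b ≫ c.singleton T := by
    rw [reassoc_of% hbot.w, hfront₂.inr_desc]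
    exact (c.isPullback_partialMapName snd b).w
  have := isIso_of_fac_of_isPushout hbot hfront₁ hfront₂ (pullback.fst (f ≫ φ) (c.singleton T))
    (pullback.lift_fst x a hx) (pullback.lift_fst fst b hfst)
  refine ⟨inv (pullback.fst (f ≫ φ) (c.singleton T)) ≫ pullback.snd _ _, ?_, ?_⟩
  · rw [← pullback.lift_fst x a hx, Category.assoc, IsIso.hom_inv_id_assoc, pullback.lift_snd]
  · rw [← pullback.lift_fst fst b hfst, Category.assoc, IsIso.hom_inv_id_assoc,
      pullback.lift_snd]

lemma isPushout_back_of_isPullback_bottom [Mono f] (htop : IsPullback fst' snd' f' g')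
    (hbot : IsPullback fst snd f g) (hfront₁ : IsPullback f' x z f)
    (hfront₂ : IsPushout g' y z g) (hback₁ : fst' ≫ x = p ≫ fst)
    (hback₂ : IsPullback snd' p y snd) : IsPushout fst' p x fst := by
  refine IsPushout.mk' hback₁ (fun _ φ φ' h₁ h₂ => ?_)
    (fun _ a b hab => exists_desc_of_isPushout htop hbot hfront₁ hfront₂ hback₂ a b hab)
  have := isIso_of_fac_of_isPushout hbot hfront₁ hfront₂ (equalizer.ι φ φ')
    (equalizer.lift_ι x h₁) (equalizer.lift_ι fst h₂)
  exact eq_of_epi_equalizer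

lemma isPullback_bottom_of_isPushout_back [Mono g] [Mono fst] (htop : IsPullback fst' snd' f' g')
    (hfront₁ : f' ≫ z = x ≫ f) (hfront₂ : IsPullback g' y z g)
    (hback₁ : IsPushout fst' p x fst) (hbot : fst ≫ f = snd ≫ g) :
    IsPullback fst snd f g := by
  let c := IsTopos.classifier 𝒞
  have : Mono g' := hfront₂.mono_fst_of_mono
  have : Mono fst' := htop.mono_fst_of_mono
  refine (c.isPullback_of_comp_χ_eq hbot.symm (hback₁.hom_ext ?_ ?_)).flip
  · rw [← reassoc_of% hfront₁, c.comp_χ_of_isPullback hfront₂.flip,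
      c.comp_χ_of_isPullback htop.flip,
      c.comp_χ_of_isPullback (IsTopos.isPullback_of_isPushout_of_mono_left hback₁).flip]
  · rw [reassoc_of% hbot, (c.isPullback g).w, (c.isPullback fst).w, ← Category.assoc,
      Subsingleton.elim (snd ≫ c.χ₀ Y) (c.χ₀ P)]

end Cube

theorem stmt15_general {𝒞 : Type u} [Category.{v} 𝒞] [IsTopos 𝒞]
    {P' X' Y' Z' P X Y Z : 𝒞}
    -- the top face
    (fst' : P' ⟶ X') (snd' : P' ⟶ Y') (f' : X' ⟶ Z') (g' : Y' ⟶ Z')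
    -- the bottom face
    (fst : P ⟶ X) (snd : P ⟶ Y) (f : X ⟶ Z) (g : Y ⟶ Z)
    -- the vertical edges
    (p : P' ⟶ P) (x : X' ⟶ X) (y : Y' ⟶ Y) (z : Z' ⟶ Z)
    -- the top and bottom faces consist of monomorphisms
    [Mono f'] [Mono g']
    [Mono fst] [Mono f] [Mono g]
    -- the cube commutes
    (hback₁ : fst' ≫ x = p ≫ fst) (hback₂ : snd' ≫ y = p ≫ snd)
    (hbot : fst ≫ f = snd ≫ g)
    -- the top face is a pullback
    (htop : IsPullback fst' snd' f' g')
    -- the two front faces are pushouts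
    (hfront₁ : IsPushout f' x z f) (hfront₂ : IsPushout g' y z g) :
    IsPullback fst snd f g ↔ (IsPushout fst' p x fst ∧ IsPushout snd' p y snd) := by
  have hF₁ := IsTopos.isPullback_of_isPushout_of_mono_left hfront₁
  have hF₂ := IsTopos.isPullback_of_isPushout_of_mono_left hfront₂
  constructor
  · intro hbotPB
    have hB₁ := isPullback_back_of_isPullback_bottom htop hfront₁.w hF₂ hback₁ hback₂ hbotPB
    have hB₂ := isPullback_back_of_isPullback_bottom htop.flip hfront₂.w hF₁ hback₂ hback₁
      hbotPB.flip
    exact ⟨isPushout_back_of_isPullback_bottom htop hbotPB hF₁ hfront₂ hback₁ hB₂,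
      isPushout_back_of_isPullback_bottom htop.flip hbotPB.flip hF₂ hfront₁ hback₂ hB₁⟩
  · rintro ⟨hB₁, -⟩
    exact isPullback_bottom_of_isPushout_back htop hfront₁.w hF₂ hB₁ hbot

/-- In a topos, consider a commutative cube whose top face
`(fst', snd', f', g')` and bottom face `(fst, snd, f, g)` consist entirely of
monomorphisms, with vertical edges `p, x, y, z` connecting the top face to the bottom
face. If the top face is a pullback and the two front faces are pushouts, then the bottom
face is a pullback if and only if the two back faces are pushouts. -/
theorem stmt15 {𝒞 : Type u} [Category.{v} 𝒞] [IsTopos 𝒞] [HasFiniteColimits 𝒞]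
    {P' X' Y' Z' P X Y Z : 𝒞}
    -- the top face
    (fst' : P' ⟶ X') (snd' : P' ⟶ Y') (f' : X' ⟶ Z') (g' : Y' ⟶ Z')
    -- the bottom face
    (fst : P ⟶ X) (snd : P ⟶ Y) (f : X ⟶ Z) (g : Y ⟶ Z)
    -- the vertical edges
    (p : P' ⟶ P) (x : X' ⟶ X) (y : Y' ⟶ Y) (z : Z' ⟶ Z)
    -- the top and bottom faces consist of monomorphisms
    [Mono fst'] [Mono snd'] [Mono f'] [Mono g']
    [Mono fst] [Mono snd] [Mono f] [Mono g]
    -- the cube commutes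
    (hback₁ : fst' ≫ x = p ≫ fst) (hback₂ : snd' ≫ y = p ≫ snd)
    (hbot : fst ≫ f = snd ≫ g)
    -- the top face is a pullback
    (htop : IsPullback fst' snd' f' g')
    -- the two front faces are pushouts
    (hfront₁ : IsPushout f' x z f) (hfront₂ : IsPushout g' y z g) :
    IsPullback fst snd f g ↔ (IsPushout fst' p x fst ∧ IsPushout snd' p y snd) :=
  stmt15_general fst' snd' f' g' fst snd f g p x y z hback₁ hback₂ hbot htop hfront₁ hfront₂
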